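/- In the Delayed-Routing Path Game on a temporal graph G = (V,E), if the traveler has a winning strategy from a state (v,t,y,V') and y' is an integer with −1 ≤ y' ≤ y, then the traveler also has a winning strategy from the state (v,t,y',V'). (Fewer remaining delays for the adversary can only help the traveler.) -/
import Mathlib


/-- A time arc of a temporal graph: start vertex, end vertex, time label, traversal time. -/
structure TimeArc (V : Type) where
  src : V
  dst : V
  time : ℕ
  trav : ℕ
deriving DecidableEq

/-- A game state of the Delayed-Routing Path Game: current vertex, current time,
remaining delay budget, and the set of already visited vertices. -/
structure PGState (V : Type) where
  v : V
  t : ℕ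
  y : ℤ
  vis : Finset V

/-- The time arc `e` is a legal move of the traveler at state `s` in the path game:
it is a time arc of the graph leaving the current vertex with time label at least
the current time (i.e., `e ∈ E_t(v)`) whose end vertex has not been visited. -/
def plegalMove {V : Type} (E : Finset (TimeArc V)) (s : PGState V) (e : TimeArc V) : Prop :=
  e ∈ E ∧ e.src = s.v ∧ s.t ≤ e.time ∧ e.dst ∉ s.vis

/-- The state resulting from traversing time arc `e` at state `s`, where the
adversary delays it by `δ` (if `d = true`) or not (if `d = false`); the current
vertex is added to the set of visited vertices. -/
def pnextState {V : Type} [DecidableEq V] (δ : ℕ) (s : PGState V) (e : TimeArc V)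
    (d : Bool) : PGState V :=
  ⟨e.dst, e.time + e.trav + (if d then δ else 0), s.y - (if d then 1 else 0),
    insert s.v s.vis⟩

/-- A state is winning for the traveler if its vertex is the target `z`
or its budget is `-1` (the adversary exceeded its budget). -/
def PWinState {V : Type} (z : V) (s : PGState V) : Prop := s.v = z ∨ s.y = -1

/-- The play of the path game determined by a traveler strategy `σ` and an adversary
strategy `τ` from starting state `s`: after `n` rounds, `(pplay δ σ τ s n).1` is the
current state and `(pplay δ σ τ s n).2` is the history of states (current first).
Strategies may depend on the entire history. -/
def pplay {V : Type} [DecidableEq V] (δ : ℕ) (σ : List (PGState V) → TimeArc V)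
    (τ : List (PGState V) → TimeArc V → Bool) (s : PGState V) :
    ℕ → PGState V × List (PGState V)
  | 0 => (s, [s])
  | n + 1 =>
    let p := pplay δ σ τ s n
    let e := σ p.2
    let s' := pnextState δ p.1 e (τ p.2 e)
    (s', s' :: p.2)

/-- The traveler has a winning strategy from state `s` in the Delayed-Routing Path
Game on the temporal graph `E` with target `z` and delay amount `δ`: there is a
traveler strategy such that against every adversary strategy, the play reaches a
winning state after finitely many moves, all moves made before that point being
legal moves from non-terminal states. -/
def PTravelerWins {V : Type} [DecidableEq V] (E : Finset (TimeArc V)) (z : V) (δ : ℕ)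
    (s : PGState V) : Prop :=
  ∃ σ : List (PGState V) → TimeArc V,
    ∀ τ : List (PGState V) → TimeArc V → Bool,
      ∃ n : ℕ, PWinState z (pplay δ σ τ s n).1 ∧
        ∀ m < n, ¬ PWinState z (pplay δ σ τ s m).1 ∧
          plegalMove E (pplay δ σ τ s m).1 (σ (pplay δ σ τ s m).2)

private lemma drpg_int_ivt (f : ℕ → ℤ) (hf : ∀ m, f m - 1 ≤ f (m+1)) (a : ℤ) :
    ∀ n, f n ≤ a → a ≤ f 0 → ∃ m ≤ n, f m = a := by
  intro n
  induction n with
  | zero => intro hA hB; exact ⟨0, le_refl 0, le_antisymm hA hB⟩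
  | succ n ih =>
    intro hA hB
    by_cases h : f n ≤ a
    · obtain ⟨m, hm, he⟩ := ih h hB
      exact ⟨m, Nat.le_succ_of_le hm, he⟩
    · push_neg at h
      have := hf n
      exact ⟨n+1, le_refl _, by omega⟩

/-- In the Delayed-Routing Path Game, if the traveler has a winning strategy from a
state `(v,t,y,V')` and `y'` is an integer with `-1 ≤ y' ≤ y`, then the traveler also
has a winning strategy from the state `(v,t,y',V')`: fewer remaining delays for the
adversary can only help the traveler. -/
theorem drpg_budget_monotone {V : Type} [DecidableEq V]
    (E : Finset (TimeArc V)) (z : V) (δ : ℕ)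
    (v : V) (t : ℕ) (y : ℤ) (V' : Finset V)
    (hwin : PTravelerWins E z δ ⟨v, t, y, V'⟩)
    (y' : ℤ) (h1 : -1 ≤ y') (h2 : y' ≤ y) :
    PTravelerWins E z δ ⟨v, t, y', V'⟩ := by
  classical
  obtain ⟨σ, hσ⟩ := hwin
  set c : ℤ := y - y' with hc
  let U : PGState V → PGState V := fun s => ⟨s.v, s.t, s.y - c, s.vis⟩
  let L : PGState V → PGState V := fun s => ⟨s.v, s.t, s.y + c, s.vis⟩
  have hLU : ∀ s, L (U s) = s := by intro s; cases s; simp [L, U]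
  have hmapLU : ∀ l : List (PGState V), (l.map U).map L = l := by
    intro l
    induction l with
    | nil => rfl
    | cons a l ih => simp [hLU, ih]
  let σ' : List (PGState V) → TimeArc V := fun h => σ (h.map L)
  refine ⟨σ', ?_⟩
  intro τ'
  let τ : List (PGState V) → TimeArc V → Bool := fun h e => τ' (h.map U) e
  obtain ⟨n, hwn, hpre⟩ := hσ τ
  set s0 : PGState V := (⟨v, t, y, V'⟩ : PGState V) with hs0
  set s0' : PGState V := (⟨v, t, y', V'⟩ : PGState V) with hs0'
  have key : ∀ k, pplay δ σ' τ' s0' k =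
      (U (pplay δ σ τ s0 k).1, (pplay δ σ τ s0 k).2.map U) := by
    intro k
    induction k with
    | zero =>
      simp only [pplay, List.map_cons, List.map_nil]
      have hs : s0' = U s0 := by
        rw [hs0, hs0']
        simp only [U, PGState.mk.injEq]
        refine ⟨trivial, trivial, by omega, trivial⟩
      rw [hs]
    | succ k ih =>
      simp only [pplay, ih]
      have hσeq : σ' ((pplay δ σ τ s0 k).2.map U) = σ (pplay δ σ τ s0 k).2 := by
        simp only [σ', hmapLU]
      have hτeq : ∀ e, τ' ((pplay δ σ τ s0 k).2.map U) e = τ (pplay δ σ τ s0 k).2 e := by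
        intro e; rfl
      rw [hσeq, hτeq]
      have hnext : ∀ (s : PGState V) (e : TimeArc V) (d : Bool),
          pnextState δ (U s) e d = U (pnextState δ s e d) := by
        intro s e d
        cases d <;> simp [pnextState, U] <;> ring
      rw [hnext]
      simp
  -- budget function of the original play
  set f : ℕ → ℤ := fun k => (pplay δ σ τ s0 k).1.y with hf
  have hstep : ∀ k, f k - 1 ≤ f (k+1) := by
    intro k
    simp only [hf, pplay, pnextState]
    split <;> omega
  have hf0 : f 0 = y := rfl
  -- existence of a winning index ≤ n for the shifted play
  have hexn : ∃ N ≤ n, PWinState z (pplay δ σ' τ' s0' N).1 := by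
    rcases hwn with hv | hy
    · exact ⟨n, le_refl n, by rw [key]; exact Or.inl hv⟩
    · have hyn : f n = -1 := hy
      obtain ⟨m, hm, he⟩ := drpg_int_ivt f hstep (c - 1) n (by omega) (by omega)
      have hem : (pplay δ σ τ s0 m).1.y = c - 1 := he
      refine ⟨m, hm, ?_⟩
      rw [key]
      exact Or.inr (by simp [U]; omega)
  obtain ⟨N, hNn, hNw⟩ := hexn
  have hex : ∃ k, PWinState z (pplay δ σ' τ' s0' k).1 := ⟨N, hNw⟩
  refine ⟨Nat.find hex, Nat.find_spec hex, ?_⟩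
  intro m hm
  have hmn : m < n := lt_of_lt_of_le hm (le_trans (Nat.find_le hNw) hNn)
  refine ⟨Nat.find_min hex hm, ?_⟩
  have hl := (hpre m hmn).2
  rw [key]
  have hσeq : σ' ((pplay δ σ τ s0 m).2.map U) = σ (pplay δ σ τ s0 m).2 := by
    simp only [σ', hmapLU]
  rw [hσeq]
  simpa [plegalMove, U] using hl
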